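/- Let P be a finite poset with gap(P) = c(P) + |P| - (max(P) + min(P) + edges(P)). Then gap(P) ≥ 0, and gap(P) = 0 if and only if P contains no five distinct elements a,b,c,d,e with a,b < c < d,e (a ∥ b, d ∥ e). -/

import Mathlib

/-!
Let `uc w` count the saturated chains from `w` up to a maximal element and `L w` (in the code
`numLowerCovers w`) the lower covers of `w`. Summing the recursion `uc u = [u maximal] + ∑_{u ⋖ w} uc w` over all `u` turns
`gap P` into `∑_w (uc w - 1) (L w - 1)`, a sum of nonnegative terms. A term is nonzero iff `w`
has two lower covers and two up-chains. Two lower covers are incomparable, and two up-chains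
branch at some element into two incomparable upper covers, so such a `w` is the centre of an X.
Conversely, for an X `a, b < c < d, e`, descending along lower covers from `c` towards `a` and
`b` until the two paths separate gives such a `w ≤ c`.
-/

open Classical

variable {α : Type*}

/-- A saturated chain from `v` up to a maximal element: a list `v = v₀ ⋖ v₁ ⋖ … ⋖ vₖ`
with `vₖ` maximal. -/
def UpChain [PartialOrder α] (v : α) (l : List α) : Prop :=
  l.Chain' (· ⋖ ·) ∧ l.head? = some v ∧ ∃ m, l.getLast? = some m ∧ IsMax m

/-- A saturated chain from a minimal element up to `v`. -/
def DownChain [PartialOrder α] (v : α) (l : List α) : Prop :=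
  l.Chain' (· ⋖ ·) ∧ (∃ m, l.head? = some m ∧ IsMin m) ∧ l.getLast? = some v

/-- `uc v` : the number of saturated chains from `v` up to a maximal element. -/
noncomputable def uc [PartialOrder α] (v : α) : ℕ := Nat.card {l : List α // UpChain v l}

/-- `dc v` : the number of saturated chains from `v` down to a minimal element. -/
noncomputable def dc [PartialOrder α] (v : α) : ℕ := Nat.card {l : List α // DownChain v l}

/-- A maximal chain: a saturated chain from a minimal element to a maximal element. -/
def IsMaxChainList [PartialOrder α] (l : List α) : Prop :=
  l.Chain' (· ⋖ ·) ∧ (∃ m, l.head? = some m ∧ IsMin m) ∧ ∃ m, l.getLast? = some m ∧ IsMax m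

/-- `c(P)`: the number of maximal chains. -/
noncomputable def numMaxChains (α : Type*) [PartialOrder α] : ℕ :=
  Nat.card {l : List α // IsMaxChainList l}

/-- `max(P)`: the number of maximal elements. -/
noncomputable def numMax (α : Type*) [PartialOrder α] : ℕ := Nat.card {v : α // IsMax v}

/-- `min(P)`: the number of minimal elements. -/
noncomputable def numMin (α : Type*) [PartialOrder α] : ℕ := Nat.card {v : α // IsMin v}

/-- `edges(P)`: the number of cover relations (edges of the Hasse diagram). -/
noncomputable def numEdges (α : Type*) [PartialOrder α] : ℕ :=
  Nat.card {p : α × α // p.1 ⋖ p.2}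

/-- `gap(P) = c(P) + |P| - (max(P) + min(P) + edges(P))`. -/
noncomputable def gap (α : Type*) [PartialOrder α] : ℤ :=
  (numMaxChains α : ℤ) + Nat.card α - ((numMax α : ℤ) + numMin α + numEdges α)

/-- The crossing number `(uc(v)-1)(dc(v)-1)` of `v`. -/
noncomputable def crossingNumber [PartialOrder α] (v : α) : ℕ := (uc v - 1) * (dc v - 1)

/-- `c` is the center of an X-shaped subposet: there are `a, b < c < d, e`
with `a ∥ b` and `d ∥ e`. -/
def IsXCenter [PartialOrder α] (c : α) : Prop :=
  ∃ a b d e : α, a < c ∧ b < c ∧ c < d ∧ c < e ∧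
    ¬ a ≤ b ∧ ¬ b ≤ a ∧ ¬ d ≤ e ∧ ¬ e ≤ d

/-- `P` contains an X-shaped subposet. -/
def HasX (α : Type*) [PartialOrder α] : Prop := ∃ c : α, IsXCenter c


open Finset

lemma CovBy.not_le_of_ne_right [PartialOrder α] {a b c : α} (hab : a ⋖ b) (hac : a ⋖ c)
    (hne : b ≠ c) : ¬ b ≤ c :=
  fun hbc => hac.2 hab.lt (hbc.lt_of_ne hne)

lemma CovBy.not_le_of_ne_left [PartialOrder α] {a b c : α} (hba : b ⋖ a) (hca : c ⋖ a)
    (hne : b ≠ c) : ¬ b ≤ c :=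
  fun hbc => hba.2 (hbc.lt_of_ne hne) hca.lt

section UpChain

variable [PartialOrder α]

lemma UpChain.exists_eq_cons {v : α} {l : List α} (h : UpChain v l) : ∃ t, l = v :: t := by
  obtain ⟨-, hhead, -⟩ := h
  cases l with
  | nil => simp at hhead
  | cons a t => exact ⟨t, by simpa using hhead⟩

lemma upChain_singleton_iff {v a : α} : UpChain v [a] ↔ a = v ∧ IsMax v := by
  simp only [UpChain, List.head?_cons, Option.some.injEq, List.getLast?_singleton,
    exists_eq_left']
  constructor
  · rintro ⟨-, rfl, h⟩; exact ⟨rfl, h⟩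
  · rintro ⟨rfl, h⟩; exact ⟨List.isChain_singleton _, rfl, h⟩

lemma upChain_cons_cons_iff {v a b : α} {l : List α} :
    UpChain v (a :: b :: l) ↔ a = v ∧ v ⋖ b ∧ UpChain b (b :: l) := by
  simp only [UpChain, List.head?_cons, Option.some.injEq, List.getLast?_cons_cons, true_and]
  constructor
  · rintro ⟨hc, rfl, hmax⟩
    obtain ⟨hab, hl⟩ := List.isChain_cons_cons.1 hc
    exact ⟨rfl, hab, hl, hmax⟩
  · rintro ⟨rfl, hab, hl, hmax⟩; exact ⟨List.isChain_cons_cons.2 ⟨hab, hl⟩, rfl, hmax⟩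

lemma UpChain.cons {u w : α} {l : List α} (huw : u ⋖ w) (h : UpChain w l) :
    UpChain u (u :: l) := by
  obtain ⟨t, rfl⟩ := h.exists_eq_cons
  exact upChain_cons_cons_iff.2 ⟨rfl, huw, h⟩

lemma UpChain.nodup {v : α} {l : List α} (h : UpChain v l) : l.Nodup :=
  (h.1.imp fun _ _ hc => hc.lt).pairwise.imp ne_of_lt

instance UpChain.finite [Finite α] (v : α) : Finite {l : List α // UpChain v l} := by
  have := Fintype.ofFinite α
  refine Set.Finite.to_subtype ((List.finite_length_le α (Fintype.card α)).subset ?_)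
  exact fun l hl => (UpChain.nodup hl).length_le_card

lemma uc_of_isMax {u : α} (hu : IsMax u) : uc u = 1 := by
  have huniq (l : List α) : UpChain u l ↔ l = [u] := by
    refine ⟨fun h => ?_, by rintro rfl; exact upChain_singleton_iff.2 ⟨rfl, hu⟩⟩
    obtain ⟨t, rfl⟩ := h.exists_eq_cons
    cases t with
    | nil => rfl
    | cons w s => exact absurd (upChain_cons_cons_iff.1 h).2.1.lt hu.not_lt
  have : Unique {l : List α // UpChain u l} :=
    { default := ⟨[u], (huniq _).2 rfl⟩
      uniq := fun l => Subtype.ext ((huniq l).1 l.2) }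
  rw [uc, Nat.card_unique]

noncomputable def upChainConsEquiv {u : α} (hu : ¬ IsMax u) :
    (Σ w : {w : α // u ⋖ w}, {l : List α // UpChain w.1 l}) ≃ {l : List α // UpChain u l} :=
  Equiv.ofBijective (fun x => ⟨u :: x.2.1, x.2.2.cons x.1.2⟩) <| by
    constructor
    · rintro ⟨⟨w₁, _⟩, ⟨l₁, hl₁⟩⟩ ⟨⟨w₂, _⟩, ⟨l₂, hl₂⟩⟩ heq
      obtain rfl : l₁ = l₂ := (List.cons_inj_right u).1 (congrArg Subtype.val heq)
      obtain ⟨t, rfl⟩ := hl₁.exists_eq_cons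
      obtain ⟨t', ht'⟩ := hl₂.exists_eq_cons
      obtain ⟨rfl, -⟩ := List.cons_eq_cons.1 ht'
      rfl
    · rintro ⟨l, hl⟩
      obtain ⟨t, rfl⟩ := hl.exists_eq_cons
      cases t with
      | nil => exact absurd (upChain_singleton_iff.1 hl).2 hu
      | cons w s =>
        obtain ⟨-, huw, hws⟩ := upChain_cons_cons_iff.1 hl
        exact ⟨⟨⟨w, huw⟩, ⟨w :: s, hws⟩⟩, rfl⟩

noncomputable def maxChainEquiv :
    (Σ v : {v : α // IsMin v}, {l : List α // UpChain v.1 l}) ≃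
      {l : List α // IsMaxChainList l} :=
  Equiv.ofBijective (fun x => ⟨x.2.1, x.2.2.1, ⟨x.1.1, x.2.2.2.1, x.1.2⟩, x.2.2.2.2⟩) <| by
    constructor
    · rintro ⟨⟨v₁, _⟩, ⟨l₁, hl₁⟩⟩ ⟨⟨v₂, _⟩, ⟨l₂, hl₂⟩⟩ heq
      obtain rfl : l₁ = l₂ := congrArg Subtype.val heq
      obtain rfl : v₁ = v₂ := Option.some_injective _ (hl₁.2.1.symm.trans hl₂.2.1)
      rfl
    · rintro ⟨l, hc, ⟨m, hm, hmin⟩, hmax⟩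
      exact ⟨⟨⟨m, hmin⟩, ⟨l, hc, hm, hmax⟩⟩, rfl⟩

end UpChain

section Finite

variable [Fintype α] [PartialOrder α]

lemma uc_eq_sum_of_not_isMax {u : α} (hu : ¬ IsMax u) : uc u = ∑ w with u ⋖ w, uc w := by
  rw [uc, ← Nat.card_congr (upChainConsEquiv hu), Nat.card_sigma,
    sum_subtype (p := (u ⋖ ·)) _ (fun w => by simp) uc]
  rfl

lemma uc_eq_ite_add_sum (u : α) :
    uc u = (if IsMax u then 1 else 0) + ∑ w with u ⋖ w, uc w := by
  by_cases hu : IsMax u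
  · have hno : ({w | u ⋖ w} : Finset α) = ∅ :=
      filter_eq_empty_iff.2 fun _ _ h => hu.not_lt h.lt
    simp [uc_of_isMax hu, hu, hno]
  · simp [uc_eq_sum_of_not_isMax hu, hu]

lemma uc_le_uc_of_covBy {u w : α} (h : u ⋖ w) : uc w ≤ uc u := by
  rw [uc_eq_ite_add_sum u]
  exact le_add_left (single_le_sum (fun _ _ => Nat.zero_le _) (by simpa using h))

lemma uc_add_uc_le_of_covBy {u w₁ w₂ : α} (h₁ : u ⋖ w₁) (h₂ : u ⋖ w₂) (hne : w₁ ≠ w₂) :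
    uc w₁ + uc w₂ ≤ uc u := by
  rw [uc_eq_ite_add_sum u]
  exact le_add_left (add_le_sum (fun _ _ => Nat.zero_le _) (by simpa using h₁)
    (by simpa using h₂) hne)

lemma one_le_uc (v : α) : 1 ≤ uc v := by
  induction v using WellFoundedGT.induction with
  | _ v ih =>
    by_cases hv : IsMax v
    · exact (uc_of_isMax hv).ge
    · obtain ⟨w, hvw⟩ := exists_covBy_of_wellFoundedLT hv
      exact (ih w hvw.lt).trans (uc_le_uc_of_covBy hvw)

lemma two_le_uc_of_incomparable {c d e : α} (hd : c ≤ d) (he : c ≤ e) (hde : ¬ d ≤ e)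
    (hed : ¬ e ≤ d) : 2 ≤ uc c := by
  induction c using WellFoundedGT.induction with
  | _ c ih =>
    have hcd : c < d := hd.lt_of_ne fun h => hde (h ▸ he)
    have hce : c < e := he.lt_of_ne fun h => hed (h ▸ hd)
    obtain ⟨w₁, hcw₁, hw₁d⟩ := exists_covBy_le_of_lt hcd
    obtain ⟨w₂, hcw₂, hw₂e⟩ := exists_covBy_le_of_lt hce
    by_cases hw : w₁ = w₂
    · subst hw
      exact (ih w₁ hcw₁.lt hw₁d hw₂e).trans (uc_le_uc_of_covBy hcw₁)
    · exact (add_le_add (one_le_uc w₁) (one_le_uc w₂)).trans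
        (uc_add_uc_le_of_covBy hcw₁ hcw₂ hw)

lemma exists_incomparable_of_two_le_uc {v : α} (h : 2 ≤ uc v) :
    ∃ d e, v < d ∧ v < e ∧ ¬ d ≤ e ∧ ¬ e ≤ d := by
  induction v using WellFoundedGT.induction with
  | _ v ih =>
    have hv : ¬ IsMax v := fun hv => by simp [uc_of_isMax hv] at h
    obtain ⟨w, hvw⟩ := exists_covBy_of_wellFoundedLT hv
    by_cases hw : ∃ w' ≠ w, v ⋖ w'
    · obtain ⟨w', hne, hvw'⟩ := hw
      exact ⟨w, w', hvw.lt, hvw'.lt, hvw.not_le_of_ne_right hvw' hne.symm,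
        hvw'.not_le_of_ne_right hvw hne⟩
    · have huc : uc v = uc w := by
        rw [uc_eq_sum_of_not_isMax hv]
        exact sum_eq_single_of_mem w (by simpa using hvw)
          fun w' hw' hne => absurd ⟨w', hne, by simpa using hw'⟩ hw
      obtain ⟨d, e, hwd, hwe, hde, hed⟩ := ih w hvw.lt (huc ▸ h)
      exact ⟨d, e, hvw.lt.trans hwd, hvw.lt.trans hwe, hde, hed⟩

noncomputable def numLowerCovers (w : α) : ℕ := #{u | u ⋖ w}

lemma numLowerCovers_eq_zero_iff {w : α} : numLowerCovers w = 0 ↔ IsMin w := by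
  rw [numLowerCovers, card_eq_zero, filter_eq_empty_iff]
  refine ⟨fun h => not_not.1 fun hw => ?_, fun hw u _ huw => hw.not_lt huw.lt⟩
  obtain ⟨u, huw⟩ := not_isMin_iff.1 hw
  obtain ⟨v, -, hvw⟩ := exists_le_covBy_of_lt huw
  exact h (mem_univ v) hvw

lemma two_le_numLowerCovers_iff {w : α} :
    2 ≤ numLowerCovers w ↔ ∃ a, a ⋖ w ∧ ∃ b, b ⋖ w ∧ a ≠ b :=
  one_lt_card.trans (by simp)

lemma exists_incomparable_of_two_le_numLowerCovers {w : α} (h : 2 ≤ numLowerCovers w) :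
    ∃ a b, a < w ∧ b < w ∧ ¬ a ≤ b ∧ ¬ b ≤ a := by
  obtain ⟨a, haw, b, hbw, hne⟩ := two_le_numLowerCovers_iff.1 h
  exact ⟨a, b, haw.lt, hbw.lt, haw.not_le_of_ne_left hbw hne,
    hbw.not_le_of_ne_left haw hne.symm⟩

lemma exists_le_two_le_numLowerCovers {a b c : α} (hac : a < c) (hbc : b < c) (hab : ¬ a ≤ b)
    (hba : ¬ b ≤ a) : ∃ w ≤ c, 2 ≤ numLowerCovers w := by
  induction c using WellFoundedLT.induction with
  | _ c ih =>
    obtain ⟨a', haa', ha'c⟩ := exists_le_covBy_of_lt hac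
    obtain ⟨b', hbb', hb'c⟩ := exists_le_covBy_of_lt hbc
    by_cases he : a' = b'
    · subst he
      obtain ⟨w, hwa', hw⟩ := ih a' ha'c.lt (haa'.lt_of_ne fun h => hba (h ▸ hbb'))
        (hbb'.lt_of_ne fun h => hab (h ▸ haa'))
      exact ⟨w, hwa'.trans ha'c.le, hw⟩
    · exact ⟨c, le_rfl, two_le_numLowerCovers_iff.2 ⟨a', ha'c, b', hb'c, he⟩⟩

lemma hasX_iff_exists_two_le_uc_numLowerCovers :
    HasX α ↔ ∃ w : α, 2 ≤ uc w ∧ 2 ≤ numLowerCovers w := by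
  constructor
  · rintro ⟨c, a, b, d, e, hac, hbc, hcd, hce, hab, hba, hde, hed⟩
    obtain ⟨w, hwc, hw⟩ := exists_le_two_le_numLowerCovers hac hbc hab hba
    exact ⟨w, two_le_uc_of_incomparable (hwc.trans hcd.le) (hwc.trans hce.le) hde hed, hw⟩
  · rintro ⟨w, huc, hlc⟩
    obtain ⟨a, b, haw, hbw, hab, hba⟩ := exists_incomparable_of_two_le_numLowerCovers hlc
    obtain ⟨d, e, hwd, hwe, hde, hed⟩ := exists_incomparable_of_two_le_uc huc
    exact ⟨w, a, b, d, e, haw, hbw, hwd, hwe, hab, hba, hde, hed⟩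

lemma numMaxChains_eq_sum : numMaxChains α = ∑ v : α with IsMin v, uc v := by
  rw [numMaxChains, ← Nat.card_congr maxChainEquiv, Nat.card_sigma,
    sum_subtype (p := IsMin) _ (fun v => by simp) uc]
  rfl

lemma numMax_eq_card : numMax α = #{v : α | IsMax v} := by
  rw [numMax, Nat.card_eq_fintype_card, Fintype.card_subtype]

lemma numMin_eq_card : numMin α = #{v : α | IsMin v} := by
  rw [numMin, Nat.card_eq_fintype_card, Fintype.card_subtype]

lemma numEdges_eq_sum : numEdges α = ∑ w : α, numLowerCovers w := by
  rw [numEdges, Nat.card_eq_fintype_card, Fintype.card_subtype, card_filter,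
    Fintype.sum_prod_type, sum_comm]
  simp [numLowerCovers]

lemma sum_uc_eq_numMax_add_sum :
    ∑ u : α, uc u = numMax α + ∑ w : α, numLowerCovers w * uc w := by
  calc ∑ u : α, uc u
      = ∑ u : α, ((if IsMax u then 1 else 0) + ∑ w, if u ⋖ w then uc w else 0) := by
        simp only [← sum_filter, ← uc_eq_ite_add_sum]
    _ = numMax α + ∑ w : α, numLowerCovers w * uc w := by
        rw [sum_add_distrib, numMax_eq_card, card_filter, sum_comm]
        simp [numLowerCovers, ← sum_filter]

lemma gap_eq_sum :
    gap α = ∑ w : α, (((uc w - 1) * (numLowerCovers w - 1) : ℕ) : ℤ) := by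
  -- At a minimal element the truncated factor `numLowerCovers w - 1` is `0` rather than `-1`;
  -- the correction `uc w - 1` summed over the minimal elements is `c(P) - min(P)`.
  have hterm (w : α) : (((uc w - 1) * (numLowerCovers w - 1) : ℕ) : ℤ) =
      numLowerCovers w * uc w - uc w - numLowerCovers w + 1
        + if IsMin w then (uc w : ℤ) - 1 else 0 := by
    by_cases hw : IsMin w
    · simp [numLowerCovers_eq_zero_iff.2 hw, hw]
    · have hlc : 1 ≤ numLowerCovers w :=
        Nat.one_le_iff_ne_zero.2 (numLowerCovers_eq_zero_iff.not.2 hw)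
      simp [hw, Nat.cast_sub hlc, Nat.cast_sub (one_le_uc w)]
      ring
  have hsum := congrArg (Nat.cast : ℕ → ℤ) (sum_uc_eq_numMax_add_sum (α := α))
  push_cast at hsum
  simp only [sum_congr rfl fun w _ => hterm w, sum_add_distrib, sum_sub_distrib, ← sum_filter]
  rw [gap, numMaxChains_eq_sum, numMin_eq_card, numEdges_eq_sum, Nat.card_eq_fintype_card]
  push_cast [sum_const, card_univ, nsmul_eq_mul, mul_one]
  linarith

end Finite

theorem gap_nonneg_and_zero_iff_X_avoiding (α : Type*) [Fintype α] [PartialOrder α] :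
    0 ≤ gap α ∧ (gap α = 0 ↔ ¬ HasX α) := by
  have hterm (w : α) : (uc w - 1) * (numLowerCovers w - 1) = 0 ↔
      ¬ (2 ≤ uc w ∧ 2 ≤ numLowerCovers w) := by
    have := one_le_uc w
    rw [Nat.mul_eq_zero]
    omega
  rw [gap_eq_sum]
  refine ⟨by positivity, ?_⟩
  rw [← Nat.cast_sum, Nat.cast_eq_zero, sum_eq_zero_iff, hasX_iff_exists_two_le_uc_numLowerCovers]
  simp [hterm]
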